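/- Consider the controlled equation ẍ(t) + a·ẋ(t) + b·x(t) = d(t)·|x(g(t))|^{m+1} / (1 + |x(g(t))|^n), where a > 0, b > 0, 0 ≤ m < n, |d(t)| ≤ d₀, and set μ = 1 if m = 0 and μ = m^{m/n} / (n·(n−m)^{m/n − 1}) if m > 0, and C = μ·d₀. If at least one of the following holds: (a) C < b ≤ a²/4 and the delay t − g(t) is bounded; (b) a²/4 ≤ b < a²/2 − C and the delay t − g(t) is bounded; (c) 4b > a² and C < a·√(4b − a²)/4; then the zero equilibrium is globally asymptotically stable: every twice differentiable solution x satisfies x(t) → 0 as t → ∞. -/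

import Mathlib

/-!
By weighted AM–GM, `u ^ m ≤ μ (1 + u ^ n)` for `u ≥ 0`, so the right-hand side `f` of the equation
obeys `|f t| ≤ C |x (g t)|`. Factoring `λ² + aλ + b = (λ - λ₁)(λ - λ₂)` with `Re λᵢ < 0` splits the
equation into `u' = λ₁ u + f`, `x' = λ₂ x + u`, and integrating factors give
`|x t| ≤ (transient decaying from time T) + K sup_{[T,t]} |f|`, with `K = 1 / b` for real roots and
`K = 4 / a²` or `K = 4 / (a √(4b - a²))` for complex ones. Each of the conditions (a)–(c) yields
`C K < 1`, so the delayed feedback is contracting: `x` is bounded, and `L = limsup |x|` satisfies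
`L ≤ C K L`, whence `L = 0`.
-/

open Filter Set Topology

/-- The maximum of `u ^ m / (1 + u ^ n)` over `u ≥ 0`, attained at `u ^ n = m / (n - m)`. -/
noncomputable def hillConstant (m n : ℝ) : ℝ :=
  if m = 0 then 1 else m ^ (m / n) / (n * (n - m) ^ (m / n - 1))

section Hill

variable {m n : ℝ}

theorem hillConstant_eq (hm : 0 < m) (hmn : m < n) :
    hillConstant m n = (1 - m / n) * (m / (n - m)) ^ (m / n) := by
  have hn : 0 < n := hm.trans hmn
  have hnm : 0 < n - m := by linarith
  rw [hillConstant, if_neg hm.ne', Real.rpow_sub_one hnm.ne', Real.div_rpow hm.le hnm.le]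
  have : 0 < (n - m) ^ (m / n) := Real.rpow_pos_of_pos hnm _
  field_simp

theorem hillConstant_nonneg (hm : 0 ≤ m) (hmn : m < n) : 0 ≤ hillConstant m n := by
  rcases hm.eq_or_lt with rfl | hm
  · simp [hillConstant]
  · rw [hillConstant_eq hm hmn]
    have : m / n < 1 := (div_lt_one (by linarith)).2 hmn
    have : 0 ≤ m / (n - m) := div_nonneg hm.le (by linarith)
    have := Real.rpow_nonneg this (m / n)
    nlinarith

theorem rpow_le_hillConstant_mul (hm : 0 ≤ m) (hmn : m < n) {u : ℝ} (hu : 0 ≤ u) :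
    u ^ m ≤ hillConstant m n * (1 + u ^ n) := by
  have hn : 0 < n := hm.trans_lt hmn
  rcases hm.eq_or_lt with rfl | hm
  · simp [hillConstant, Real.rpow_nonneg hu n]
  set θ := m / n
  set c := m / (n - m)
  have hθ : 0 < θ := div_pos hm hn
  have hθ1 : θ < 1 := (div_lt_one hn).2 hmn
  have hc : 0 < c := div_pos hm (by linarith)
  have hθc : θ / c = 1 - θ := by simp only [θ, c]; field_simp
  have hv : 0 ≤ u ^ n := Real.rpow_nonneg hu n
  have hum : u ^ m = (u ^ n) ^ θ := by
    rw [← Real.rpow_mul hu]; simp only [θ]; field_simp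
  have amgm := Real.geom_mean_le_arith_mean2_weighted hθ.le (by linarith : 0 ≤ 1 - θ)
    (div_nonneg hv hc.le) zero_le_one (by ring)
  rw [Real.one_rpow, mul_one, Real.div_rpow hv hc.le, div_le_iff₀ (by positivity)] at amgm
  rw [hillConstant_eq hm hmn, hum]
  calc (u ^ n) ^ θ ≤ (θ * (u ^ n / c) + (1 - θ) * 1) * c ^ θ := amgm
    _ = (θ / c * u ^ n + (1 - θ)) * c ^ θ := by ring
    _ = (1 - θ) * c ^ θ * (1 + u ^ n) := by rw [hθc]; ring

theorem abs_mul_rpow_div_one_add_rpow_le (hm : 0 ≤ m) (hmn : m < n) {d d₀ : ℝ}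
    (hd : |d| ≤ d₀) (u : ℝ) :
    |d * |u| ^ (m + 1) / (1 + |u| ^ n)| ≤ hillConstant m n * d₀ * |u| := by
  have hu := abs_nonneg u
  have hden : 0 < 1 + |u| ^ n := by have := Real.rpow_nonneg hu n; linarith
  have hratio : |u| ^ (m + 1) / (1 + |u| ^ n) ≤ hillConstant m n * |u| := by
    rw [div_le_iff₀ hden, Real.rpow_add_one' hu (by linarith)]
    nlinarith [rpow_le_hillConstant_mul hm hmn hu]
  rw [abs_div, abs_mul, abs_of_nonneg (Real.rpow_nonneg hu _), abs_of_pos hden, mul_div_assoc]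
  calc |d| * (|u| ^ (m + 1) / (1 + |u| ^ n)) ≤ d₀ * (hillConstant m n * |u|) := by
        gcongr
        exact (abs_nonneg d).trans hd
    _ = hillConstant m n * d₀ * |u| := by ring

end Hill

theorem norm_exp_mul_sub_le_of_hasDerivAt_mul_add {l : ℂ} {m ν A c T t : ℝ} {y F : ℝ → ℂ}
    (hl : l.re = -m) (hm : m ≠ 0) (hνm : ν ≤ m) (hA : 0 ≤ A) (hTt : T ≤ t)
    (hy : ∀ s ∈ Icc T t, HasDerivAt y (l * y s + F s) s)
    (hF : ∀ s ∈ Icc T t, ‖F s‖ ≤ A * Real.exp (-ν * (s - T)) + c) :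
    ‖Complex.exp (-l * (t - T)) * y t - y T‖
      ≤ A * Real.exp ((m - ν) * (t - T)) * (t - T) + c / m * (Real.exp (m * (t - T)) - 1) := by
  set E : ℝ → ℂ := fun s => Complex.exp (-l * (s - T))
  have hE : ∀ s, HasDerivAt E (-l * E s) s := fun s => by
    simpa [E, mul_comm] using
      (((hasDerivAt_id (s : ℂ)).sub_const (T : ℂ)).const_mul (-l)).cexp.comp_ofReal
  have hz : ∀ s ∈ Icc T t, HasDerivAt (fun s => E s * y s - E T * y T) (E s * F s) s :=
    fun s hs => (((hE s).mul (hy s hs)).sub_const (E T * y T)).congr_deriv (by ring)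
  have hEnorm : ∀ s, ‖E s‖ = Real.exp (m * (s - T)) := fun s => by
    simp [E, Complex.norm_exp, hl]
  set D := A * Real.exp ((m - ν) * (t - T))
  -- an antiderivative of the bound on `‖E s * F s‖` below, used as comparison function
  have hB : ∀ s, HasDerivAt (fun s => D * (s - T) + c / m * (Real.exp (m * (s - T)) - 1))
      (D + c * Real.exp (m * (s - T))) s := fun s => by
    refine ((((hasDerivAt_id s).sub_const T).const_mul D).add
      ((((hasDerivAt_id s).sub_const T).const_mul m).exp.sub_const 1 |>.const_mul (c / m))
      ).congr_deriv ?_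
    simp only [id]
    field_simp
  have bound : ∀ s ∈ Ico T t, ‖E s * F s‖ ≤ D + c * Real.exp (m * (s - T)) := by
    intro s hs
    calc ‖E s * F s‖ ≤ Real.exp (m * (s - T)) * (A * Real.exp (-ν * (s - T)) + c) := by
          rw [norm_mul, hEnorm]
          gcongr
          exact hF s (Ico_subset_Icc_self hs)
      _ = A * Real.exp ((m - ν) * (s - T)) + c * Real.exp (m * (s - T)) := by
          rw [mul_add, mul_left_comm, ← Real.exp_add]
          ring_nf
      _ ≤ D + c * Real.exp (m * (s - T)) := by
          unfold D
          gcongr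
          nlinarith [hs.2]
  simpa [E] using image_norm_le_of_norm_deriv_right_le_deriv_boundary
    (fun s hs => (hz s hs).continuousAt.continuousWithinAt)
    (fun s hs => (hz s (Ico_subset_Icc_self hs)).hasDerivWithinAt) (by simp) hB bound
    (right_mem_Icc.2 hTt)

theorem norm_le_of_hasDerivAt_mul_add {l : ℂ} {m ν A c T t : ℝ} {y F : ℝ → ℂ}
    (hl : l.re = -m) (hm : 0 < m) (hνm : ν ≤ m) (hA : 0 ≤ A) (hc : 0 ≤ c) (hTt : T ≤ t)
    (hy : ∀ s ∈ Icc T t, HasDerivAt y (l * y s + F s) s)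
    (hF : ∀ s ∈ Icc T t, ‖F s‖ ≤ A * Real.exp (-ν * (s - T)) + c) :
    ‖y t‖ ≤ (‖y T‖ + A * (t - T)) * Real.exp (-ν * (t - T)) + c / m := by
  have hz := norm_exp_mul_sub_le_of_hasDerivAt_mul_add hl hm.ne' hνm hA hTt hy hF
  have hyt : ‖y t‖ = Real.exp (-m * (t - T)) * ‖Complex.exp (-l * (t - T)) * y t‖ := by
    rw [norm_mul, Complex.norm_exp, ← mul_assoc, ← Real.exp_add]
    simp [hl]
  have hzt := (norm_le_insert' (Complex.exp (-l * (t - T)) * y t) (y T)).trans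
    (add_le_add_right hz _)
  have hdecay : Real.exp (-m * (t - T)) ≤ Real.exp (-ν * (t - T)) := by gcongr
  have hmν : Real.exp (-m * (t - T)) * Real.exp ((m - ν) * (t - T))
      = Real.exp (-ν * (t - T)) := by
    rw [← Real.exp_add]; ring_nf
  have hm1 : Real.exp (-m * (t - T)) * Real.exp (m * (t - T)) = 1 := by
    rw [← Real.exp_add]; simp
  calc ‖y t‖ ≤ Real.exp (-m * (t - T)) * (‖y T‖ + (A * Real.exp ((m - ν) * (t - T)) * (t - T)
        + c / m * (Real.exp (m * (t - T)) - 1))) := by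
        rw [hyt]; gcongr
    _ = Real.exp (-m * (t - T)) * ‖y T‖ + A * (t - T) * Real.exp (-ν * (t - T))
        + c / m - c / m * Real.exp (-m * (t - T)) := by
        linear_combination A * (t - T) * hmν + c / m * hm1
    _ ≤ (‖y T‖ + A * (t - T)) * Real.exp (-ν * (t - T)) + c / m := by
        have : 0 ≤ c / m * Real.exp (-m * (t - T)) := by positivity
        nlinarith [norm_nonneg (y T)]

section RootFactorization

variable {a b m₁ m₂ c T t : ℝ} {l₁ l₂ : ℂ} {X V f : ℝ → ℂ}

theorem hasDerivAt_sub_mul_of_roots (hsum : l₁ + l₂ = -a) (hprod : l₁ * l₂ = b) {s : ℝ}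
    (hX : HasDerivAt X (V s) s) (hV : HasDerivAt V (-a * V s - b * X s + f s) s) :
    HasDerivAt (fun s => V s - l₂ * X s) (l₁ * (V s - l₂ * X s) + f s) s :=
  (hV.sub (hX.const_mul l₂)).congr_deriv
    (by linear_combination (-(V s)) * hsum + X s * hprod)

theorem norm_le_of_roots (hsum : l₁ + l₂ = -a) (hprod : l₁ * l₂ = b)
    (h₁ : l₁.re = -m₁) (h₂ : l₂.re = -m₂) (hm₁ : 0 < m₁) (hm₂ : 0 < m₂) (hTt : T ≤ t)
    (hX : ∀ s ∈ Icc T t, HasDerivAt X (V s) s)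
    (hV : ∀ s ∈ Icc T t, HasDerivAt V (-a * V s - b * X s + f s) s)
    (hf : ∀ s ∈ Icc T t, ‖f s‖ ≤ c) :
    ‖X t‖ ≤ (‖X T‖ + ‖V T - l₂ * X T‖ * (t - T)) * Real.exp (-min m₁ m₂ * (t - T))
      + c / (m₁ * m₂) := by
  have hc : 0 ≤ c := (norm_nonneg _).trans (hf T (left_mem_Icc.2 hTt))
  have hu : ∀ s ∈ Icc T t, ‖V s - l₂ * X s‖
      ≤ ‖V T - l₂ * X T‖ * Real.exp (-min m₁ m₂ * (s - T)) + c / m₁ := by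
    intro s hs
    have hsub : Icc T s ⊆ Icc T t := Icc_subset_Icc_right hs.2
    simpa using norm_le_of_hasDerivAt_mul_add h₁ hm₁ (min_le_left _ _) le_rfl hc hs.1
      (fun r hr => hasDerivAt_sub_mul_of_roots hsum hprod (hX r (hsub hr)) (hV r (hsub hr)))
      (fun r hr => by simpa using hf r (hsub hr))
  have := norm_le_of_hasDerivAt_mul_add (y := X) h₂ hm₂ (min_le_right _ _) (norm_nonneg _)
    (div_nonneg hc hm₁.le) hTt
    (fun s hs => (hX s hs).congr_deriv (by ring)) hu
  rwa [div_div] at this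

theorem norm_le_of_distinct_roots (hsum : l₁ + l₂ = -a) (hprod : l₁ * l₂ = b) (hne : l₁ ≠ l₂)
    (h₁ : l₁.re = -m₁) (h₂ : l₂.re = -m₂) (hm₁ : 0 < m₁) (hm₂ : 0 < m₂) (hTt : T ≤ t)
    (hX : ∀ s ∈ Icc T t, HasDerivAt X (V s) s)
    (hV : ∀ s ∈ Icc T t, HasDerivAt V (-a * V s - b * X s + f s) s)
    (hf : ∀ s ∈ Icc T t, ‖f s‖ ≤ c) :
    ‖X t‖ ≤ (‖V T - l₂ * X T‖ + ‖V T - l₁ * X T‖) / ‖l₁ - l₂‖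
        * Real.exp (-min m₁ m₂ * (t - T)) + (c / m₁ + c / m₂) / ‖l₁ - l₂‖ := by
  have hc : 0 ≤ c := (norm_nonneg _).trans (hf T (left_mem_Icc.2 hTt))
  have hu := norm_le_of_hasDerivAt_mul_add h₁ hm₁ (min_le_left m₁ m₂) le_rfl hc hTt
    (fun s hs => hasDerivAt_sub_mul_of_roots hsum hprod (hX s hs) (hV s hs))
    (fun s hs => by simpa using hf s hs)
  have hw := norm_le_of_hasDerivAt_mul_add h₂ hm₂ (min_le_right m₁ m₂) le_rfl hc hTt
    (fun s hs => hasDerivAt_sub_mul_of_roots (by rwa [add_comm]) (by rwa [mul_comm])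
      (hX s hs) (hV s hs))
    (fun s hs => by simpa using hf s hs)
  have hXt : X t = ((V t - l₂ * X t) - (V t - l₁ * X t)) / (l₁ - l₂) := by
    field_simp [sub_ne_zero.2 hne]
    ring
  rw [hXt, norm_div, div_mul_eq_mul_div, ← add_div]
  gcongr
  refine (norm_sub_le _ _).trans ?_
  simp only [zero_mul, add_zero] at hu hw
  linarith

end RootFactorization

/-- Solutions of `x'' + a x' + b x = f` forget their state at time `T` at rate `ν` and respond
to the forcing with gain `K`. -/
def ForcedResponseBound (a b K ν : ℝ) : Prop :=
  ∀ (x v f : ℝ → ℝ) (T : ℝ), (∀ s ≥ T, HasDerivAt x (v s) s) →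
    (∀ s ≥ T, HasDerivAt v (-a * v s - b * x s + f s) s) →
    ∃ P Q : ℝ, 0 ≤ P ∧ 0 ≤ Q ∧ ∀ t ≥ T, ∀ c, (∀ s ∈ Icc T t, |f s| ≤ c) →
      |x t| ≤ (P + Q * (t - T)) * Real.exp (-ν * (t - T)) + K * c

section ForcedResponse

variable {a b m₁ m₂ : ℝ} {l₁ l₂ : ℂ}

theorem forcedResponseBound_of_roots (hsum : l₁ + l₂ = -a) (hprod : l₁ * l₂ = b)
    (h₁ : l₁.re = -m₁) (h₂ : l₂.re = -m₂) (hm₁ : 0 < m₁) (hm₂ : 0 < m₂) :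
    ForcedResponseBound a b (m₁ * m₂)⁻¹ (min m₁ m₂) := by
  intro x v f T hx hv
  refine ⟨|x T|, ‖(v T : ℂ) - l₂ * x T‖, abs_nonneg _, norm_nonneg _, fun t ht c hf => ?_⟩
  have := norm_le_of_roots (X := fun s => (x s : ℂ)) (V := fun s => (v s : ℂ))
    (f := fun s => (f s : ℂ)) hsum hprod h₁ h₂ hm₁ hm₂ ht
    (fun s hs => (hx s hs.1).ofReal_comp)
    (fun s hs => by exact_mod_cast (hv s hs.1).ofReal_comp)
    (fun s hs => by simpa using hf s hs)
  simpa [div_eq_inv_mul] using this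

theorem forcedResponseBound_of_distinct_roots (hsum : l₁ + l₂ = -a) (hprod : l₁ * l₂ = b)
    (hne : l₁ ≠ l₂) (h₁ : l₁.re = -m₁) (h₂ : l₂.re = -m₂) (hm₁ : 0 < m₁) (hm₂ : 0 < m₂) :
    ForcedResponseBound a b ((m₁⁻¹ + m₂⁻¹) / ‖l₁ - l₂‖) (min m₁ m₂) := by
  intro x v f T hx hv
  refine ⟨(‖(v T : ℂ) - l₂ * x T‖ + ‖(v T : ℂ) - l₁ * x T‖) / ‖l₁ - l₂‖, 0,
    by positivity, le_rfl, fun t ht c hf => ?_⟩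
  have := norm_le_of_distinct_roots (X := fun s => (x s : ℂ)) (V := fun s => (v s : ℂ))
    (f := fun s => (f s : ℂ)) hsum hprod hne h₁ h₂ hm₁ hm₂ ht
    (fun s hs => (hx s hs.1).ofReal_comp)
    (fun s hs => by exact_mod_cast (hv s hs.1).ofReal_comp)
    (fun s hs => by simpa using hf s hs)
  rw [Complex.norm_real, Real.norm_eq_abs] at this
  exact this.trans_eq (by ring)

end ForcedResponse

section CharacteristicRoots

variable {a b C : ℝ}

theorem exists_forcedResponseBound_of_le (ha : 0 < a) (hb : 0 < b) (hab : b ≤ a ^ 2 / 4) :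
    ∃ ν > 0, ForcedResponseBound a b b⁻¹ ν := by
  set β := √(a ^ 2 - 4 * b)
  have hβ2 : β ^ 2 = a ^ 2 - 4 * b := Real.sq_sqrt (by linarith)
  have hβ : 0 ≤ β := Real.sqrt_nonneg _
  have hβa : β < a := by nlinarith
  have hprod : (a - β) / 2 * ((a + β) / 2) = b := by nlinarith
  refine ⟨min ((a - β) / 2) ((a + β) / 2), lt_min (by linarith) (by linarith), ?_⟩
  rw [← hprod]
  refine forcedResponseBound_of_roots (l₁ := ((-a + β) / 2 : ℝ)) (l₂ := ((-a - β) / 2 : ℝ))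
    ?_ ?_ ?_ ?_ (by linarith) (by linarith)
  · push_cast; ring
  · rw [← Complex.ofReal_mul]; congr 1; ring
  · simp only [Complex.ofReal_re]; ring
  · simp only [Complex.ofReal_re]; ring

theorem exists_forcedResponseBound_of_lt (ha : 0 < a) (hab : a ^ 2 / 4 < b) :
    ∃ ν > 0, ForcedResponseBound a b (4 / a ^ 2) ν ∧
      ForcedResponseBound a b (4 / (a * √(4 * b - a ^ 2))) ν := by
  set ω := √(4 * b - a ^ 2) / 2
  have hω : 0 < ω := by have := Real.sqrt_pos.2 (by linarith : 0 < 4 * b - a ^ 2); positivity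
  have hω2 : ω ^ 2 = b - a ^ 2 / 4 := by
    rw [div_pow, Real.sq_sqrt (by linarith)]; ring
  set l₁ : ℂ := -(a / 2 : ℝ) + ω * Complex.I
  set l₂ : ℂ := -(a / 2 : ℝ) - ω * Complex.I
  have hsum : l₁ + l₂ = -a := by push_cast [l₁, l₂]; ring
  have hprod : l₁ * l₂ = b := by
    have : (b : ℂ) = ((a ^ 2 / 4 + ω ^ 2 : ℝ) : ℂ) := by rw [hω2]; ring_nf
    rw [this]; push_cast [l₁, l₂]
    linear_combination (-(ω : ℂ) ^ 2) * Complex.I_sq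
  have h₁ : l₁.re = -(a / 2) := by simp [l₁]
  have h₂ : l₂.re = -(a / 2) := by simp [l₂]
  have hdiff : ‖l₁ - l₂‖ = √(4 * b - a ^ 2) := by
    have : l₁ - l₂ = ((2 * ω : ℝ) : ℂ) * Complex.I := by push_cast [l₁, l₂]; ring
    rw [this, norm_mul, Complex.norm_I, mul_one, Complex.norm_real, Real.norm_eq_abs,
      abs_of_pos (by positivity)]
    ring
  have hne : l₁ ≠ l₂ := by
    rw [← sub_ne_zero, ← norm_ne_zero_iff, hdiff]
    exact (Real.sqrt_pos.2 (by linarith)).ne'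
  refine ⟨a / 2, by positivity, ?_, ?_⟩
  · have := forcedResponseBound_of_roots hsum hprod h₁ h₂ (by positivity) (by positivity)
    rwa [min_self, show (a / 2 * (a / 2))⁻¹ = 4 / a ^ 2 by field_simp; ring] at this
  · have := forcedResponseBound_of_distinct_roots hsum hprod hne h₁ h₂
      (by positivity) (by positivity)
    rwa [min_self, hdiff, show ((a / 2)⁻¹ + (a / 2)⁻¹) / √(4 * b - a ^ 2)
      = 4 / (a * √(4 * b - a ^ 2)) by field_simp; ring] at this

end CharacteristicRoots

theorem exists_forcedResponseBound {a b C : ℝ} (ha : 0 < a) (hC : 0 ≤ C)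
    (h : (C < b ∧ b ≤ a ^ 2 / 4) ∨ (a ^ 2 / 4 ≤ b ∧ b < a ^ 2 / 2 - C) ∨
      (a ^ 2 < 4 * b ∧ C < a * √(4 * b - a ^ 2) / 4)) :
    ∃ K ν, 0 < ν ∧ C * K < 1 ∧ ForcedResponseBound a b K ν := by
  obtain ⟨hCb, hab⟩ | ⟨hab, hCa⟩ | ⟨hab, hCa⟩ :
      (C < b ∧ b ≤ a ^ 2 / 4) ∨ (a ^ 2 / 4 < b ∧ C < a ^ 2 / 4) ∨
      (a ^ 2 / 4 < b ∧ C < a * √(4 * b - a ^ 2) / 4) := by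
    rcases h with h | ⟨hab, hba⟩ | ⟨hab, hCa⟩
    · exact Or.inl h
    · rcases hab.eq_or_lt with heq | hlt
      · exact Or.inl ⟨by linarith, heq.ge⟩
      · exact Or.inr (Or.inl ⟨hlt, by linarith⟩)
    · exact Or.inr (Or.inr ⟨by linarith, hCa⟩)
  · obtain ⟨ν, hν, hK⟩ := exists_forcedResponseBound_of_le ha (hC.trans_lt hCb) hab
    refine ⟨b⁻¹, ν, hν, ?_, hK⟩
    rwa [← div_eq_mul_inv, div_lt_one (by linarith)]
  · obtain ⟨ν, hν, hK, -⟩ := exists_forcedResponseBound_of_lt ha hab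
    refine ⟨4 / a ^ 2, ν, hν, ?_, hK⟩
    rw [mul_div_assoc', div_lt_one (by positivity)]
    linarith
  · obtain ⟨ν, hν, -, hK⟩ := exists_forcedResponseBound_of_lt ha hab
    have : 0 < a * √(4 * b - a ^ 2) := mul_pos ha (Real.sqrt_pos.2 (by linarith))
    refine ⟨4 / (a * √(4 * b - a ^ 2)), ν, hν, ?_, hK⟩
    rw [mul_div_assoc', div_lt_one this]
    linarith

theorem affine_mul_exp_neg_le {P Q ν τ : ℝ} (hP : 0 ≤ P) (hQ : 0 ≤ Q) (hν : 0 < ν)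
    (hτ : 0 ≤ τ) : (P + Q * τ) * Real.exp (-ν * τ) ≤ P + Q / ν := by
  have h1 : Real.exp (-ν * τ) ≤ 1 := Real.exp_le_one_iff.2 (by nlinarith)
  have h2 : ν * τ * Real.exp (-ν * τ) ≤ 1 := by
    rw [neg_mul, Real.exp_neg, ← div_eq_mul_inv, div_le_one (Real.exp_pos _)]
    linarith [Real.add_one_le_exp (ν * τ)]
  have h3 : Q * τ * Real.exp (-ν * τ) ≤ Q / ν := by
    rw [le_div_iff₀ hν]; nlinarith
  nlinarith [Real.exp_pos (-ν * τ)]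

theorem tendsto_affine_mul_exp_neg (P Q T : ℝ) {ν : ℝ} (hν : 0 < ν) :
    Tendsto (fun t => (P + Q * (t - T)) * Real.exp (-ν * (t - T))) atTop (𝓝 0) := by
  have hτ := (tendsto_rpow_mul_exp_neg_mul_atTop_nhds_zero 0 ν hν).const_mul P |>.add
    ((tendsto_rpow_mul_exp_neg_mul_atTop_nhds_zero 1 ν hν).const_mul Q)
  simp only [mul_zero, add_zero, Real.rpow_zero, Real.rpow_one] at hτ
  refine (hτ.comp (tendsto_atTop_add_const_right atTop (-T) tendsto_id)).congr fun t => ?_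
  simp only [Function.comp, id]
  ring_nf

section DelayedFeedback

variable {x g φ : ℝ → ℝ} {t₀ q M R : ℝ}

theorem exists_abs_le_of_delayed_bound (hx : Continuous x) (hg : ∀ t, g t ≤ t) (hq : q < 1)
    (hM : ∀ t ≤ t₀, |x t| ≤ M) (hφ : BddAbove (φ '' Ici t₀))
    (hest : ∀ t ≥ t₀, ∀ r, (∀ s ∈ Icc t₀ t, |x (g s)| ≤ r) → |x t| ≤ φ t + q * r) :
    ∃ R, ∀ t, |x t| ≤ R := by
  obtain ⟨A, hA⟩ := hφ
  refine ⟨max M (A / (1 - q)), fun t => ?_⟩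
  rcases le_or_gt t t₀ with ht | ht
  · exact (hM t ht).trans (le_max_left _ _)
  obtain ⟨z, hz, hzmax⟩ := isCompact_Icc.exists_isMaxOn (nonempty_Icc.2 ht.le)
    (continuous_abs.comp hx).continuousOn
  have hxz : |x z| ≤ A + q * max M |x z| := by
    refine (hest z hz.1 _ fun s hs => ?_).trans (add_le_add_left (hA ⟨z, hz.1, rfl⟩) _)
    rcases le_or_gt (g s) t₀ with hgs | hgs
    · exact (hM _ hgs).trans (le_max_left _ _)
    · exact (hzmax ⟨hgs.le, (hg s).trans (hs.2.trans hz.2)⟩).trans (le_max_right _ _)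
  refine (hzmax ⟨ht.le, le_rfl⟩ : |x t| ≤ |x z|).trans ?_
  rcases le_total |x z| M with h | h
  · exact h.trans (le_max_left _ _)
  · rw [max_eq_right h] at hxz
    have : |x z| ≤ A / (1 - q) := by rw [le_div_iff₀ (by linarith)]; linarith
    exact this.trans (le_max_right _ _)

theorem tendsto_zero_of_abs_le_of_delayed_bound (hR : ∀ t, |x t| ≤ R)
    (hg : Tendsto g atTop atTop) (hq : q < 1)
    (hest : ∀ T ≥ t₀, ∃ φ : ℝ → ℝ, Tendsto φ atTop (𝓝 0) ∧
      ∀ t ≥ T, ∀ r, (∀ s ∈ Icc T t, |x (g s)| ≤ r) → |x t| ≤ φ t + q * r) :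
    Tendsto x atTop (𝓝 0) := by
  set L := limsup (fun t => |x t|) atTop
  have hbdd : IsBoundedUnder (· ≤ ·) atTop fun t => |x t| := isBoundedUnder_of ⟨R, hR⟩
  have hcobdd : IsCoboundedUnder (· ≤ ·) atTop fun t => |x t| :=
    (isBoundedUnder_of ⟨0, fun t => abs_nonneg (x t)⟩).isCoboundedUnder_le
  have hstep : ∀ ε > 0, L ≤ ε + q * (L + ε) := by
    intro ε hε
    obtain ⟨T₁, hT₁⟩ := eventually_atTop.1
      (hg.eventually (eventually_lt_of_limsup_lt (lt_add_of_pos_right L hε) hbdd))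
    obtain ⟨φ, hφ, hφx⟩ := hest (max T₁ t₀) (le_max_right _ _)
    refine limsup_le_of_le hcobdd ?_
    filter_upwards [eventually_ge_atTop (max T₁ t₀), hφ.eventually (gt_mem_nhds hε)]
      with t ht hφt
    have := hφx t ht (L + ε) fun s hs => (hT₁ s ((le_max_left _ _).trans hs.1)).le
    linarith
  have hL : L ≤ 0 := by
    by_contra! hpos
    have hε : 0 < (1 - q) * L / 4 := by have := sub_pos.2 hq; positivity
    have := hstep _ hε
    nlinarith [mul_le_mul_of_nonneg_right hq.le hε.le]
  refine Metric.tendsto_nhds.2 fun ε hε => ?_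
  filter_upwards [eventually_lt_of_limsup_lt (hL.trans_lt hε) hbdd] with t ht
  rwa [Real.dist_eq, sub_zero]

theorem tendsto_zero_of_delayed_bound (hx : Continuous x) (hg : ∀ t, g t ≤ t)
    (hg_tendsto : Tendsto g atTop atTop) (hq : q < 1)
    (hM : ∀ t ≤ t₀, |x t| ≤ M)
    (hest : ∀ T ≥ t₀, ∃ φ : ℝ → ℝ, Tendsto φ atTop (𝓝 0) ∧ BddAbove (φ '' Ici T) ∧
      ∀ t ≥ T, ∀ r, (∀ s ∈ Icc T t, |x (g s)| ≤ r) → |x t| ≤ φ t + q * r) :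
    Tendsto x atTop (𝓝 0) := by
  obtain ⟨φ, -, hφ, hφx⟩ := hest t₀ le_rfl
  obtain ⟨R, hR⟩ := exists_abs_le_of_delayed_bound hx hg hq hM hφ hφx
  exact tendsto_zero_of_abs_le_of_delayed_bound hR hg_tendsto hq
    fun T hT => (hest T hT).imp fun _ h => ⟨h.1, h.2.2⟩

end DelayedFeedback

theorem controlled_hill_type_equation_stability_general
    (t₀ a b m n d₀ μ C : ℝ)
    (d : ℝ → ℝ) (g : ℝ → ℝ)
    (hd : ∀ t, |d t| ≤ d₀)
    (hgle : ∀ t, g t ≤ t) (hgtend : Tendsto g atTop atTop)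
    (ha : 0 < a) (hm : 0 ≤ m) (hmn : m < n)
    (hμ : μ = if m = 0 then (1:ℝ) else m ^ (m / n) / (n * (n - m) ^ (m / n - 1)))
    (hC : C = μ * d₀)
    (hcond :
      (C < b ∧ b ≤ a ^ 2 / 4 ∧ ∃ τ > (0:ℝ), ∀ t, t - g t ≤ τ) ∨
      (a ^ 2 / 4 ≤ b ∧ b < a ^ 2 / 2 - C ∧ ∃ τ > (0:ℝ), ∀ t, t - g t ≤ τ) ∨
      (4 * b > a ^ 2 ∧ C < a * Real.sqrt (4 * b - a ^ 2) / 4))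
    (x x' x'' : ℝ → ℝ)
    (hx' : ∀ t, HasDerivAt x (x' t) t) (hx'' : ∀ t, HasDerivAt x' (x'' t) t)
    (hinit : ∃ M : ℝ, ∀ t ≤ t₀, |x t| ≤ M ∧ |x' t| ≤ M)
    (heq : ∀ t ≥ t₀, x'' t + a * x' t + b * x t
        = d t * |x (g t)| ^ (m + 1) / (1 + |x (g t)| ^ n)) :
    Tendsto x atTop (nhds 0) := by
  have hμ_eq : μ = hillConstant m n := hμ
  have hC0 : 0 ≤ C := hC ▸ mul_nonneg (hμ_eq ▸ hillConstant_nonneg hm hmn)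
    ((abs_nonneg _).trans (hd 0))
  obtain ⟨K, ν, hν, hCK, hresponse⟩ := exists_forcedResponseBound ha hC0
    (hcond.imp (fun h => ⟨h.1, h.2.1⟩) (Or.imp (fun h => ⟨h.1, h.2.1⟩) id))
  obtain ⟨M, hM⟩ := hinit
  set f := fun t => d t * |x (g t)| ^ (m + 1) / (1 + |x (g t)| ^ n)
  have hf : ∀ t, |f t| ≤ C * |x (g t)| := fun t => by
    simpa only [hC, hμ_eq] using abs_mul_rpow_div_one_add_rpow_le hm hmn (hd t) (x (g t))
  refine tendsto_zero_of_delayed_bound (q := C * K)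
    (continuous_iff_continuousAt.2 fun t => (hx' t).continuousAt) hgle hgtend hCK
    (fun t ht => (hM t ht).1) fun T hT => ?_
  obtain ⟨P, Q, hP, hQ, hPQ⟩ := hresponse x x' f T (fun s _ => hx' s)
    (fun s hs => (hx'' s).congr_deriv (by linarith [heq s (hT.trans hs)]))
  refine ⟨_, tendsto_affine_mul_exp_neg P Q T hν, ⟨P + Q / ν, ?_⟩, fun t ht r hr => ?_⟩
  · rintro _ ⟨t, ht, rfl⟩
    exact affine_mul_exp_neg_le hP hQ hν (sub_nonneg.2 ht)
  · calc |x t| ≤ _ := hPQ t ht (C * r) fun s hs =>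
          (hf s).trans (mul_le_mul_of_nonneg_left (hr s hs) hC0)
      _ = _ := by ring

/-- Example 3: global asymptotic stability of the zero equilibrium of
ẍ(t) + a·ẋ(t) + b·x(t) = d(t)·|x(g(t))|^{m+1}/(1 + |x(g(t))|^n) with C = μ·d₀. -/
theorem controlled_hill_type_equation_stability
    (t₀ a b m n d₀ μ C : ℝ)
    (d : ℝ → ℝ) (g : ℝ → ℝ)
    (hdmeas : Measurable d) (hd : ∀ t, |d t| ≤ d₀)
    (hgmeas : Measurable g) (hgle : ∀ t, g t ≤ t) (hgtend : Tendsto g atTop atTop)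
    (ha : 0 < a) (hb : 0 < b) (hm : 0 ≤ m) (hmn : m < n)
    (hμ : μ = if m = 0 then (1:ℝ) else m ^ (m / n) / (n * (n - m) ^ (m / n - 1)))
    (hC : C = μ * d₀)
    (hcond :
      (C < b ∧ b ≤ a ^ 2 / 4 ∧ ∃ τ > (0:ℝ), ∀ t, t - g t ≤ τ) ∨
      (a ^ 2 / 4 ≤ b ∧ b < a ^ 2 / 2 - C ∧ ∃ τ > (0:ℝ), ∀ t, t - g t ≤ τ) ∨
      (4 * b > a ^ 2 ∧ C < a * Real.sqrt (4 * b - a ^ 2) / 4))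
    (x x' x'' : ℝ → ℝ)
    (hx' : ∀ t, HasDerivAt x (x' t) t) (hx'' : ∀ t, HasDerivAt x' (x'' t) t)
    (hinit : ∃ M : ℝ, ∀ t ≤ t₀, |x t| ≤ M ∧ |x' t| ≤ M)
    (heq : ∀ t ≥ t₀, x'' t + a * x' t + b * x t
        = d t * |x (g t)| ^ (m + 1) / (1 + |x (g t)| ^ n)) :
    Tendsto x atTop (nhds 0) :=
  controlled_hill_type_equation_stability_general t₀ a b m n d₀ μ C d g hd hgle hgtend ha hm hmn hμ
    hC hcond x x' x'' hx' hx'' hinit heq
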